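/- Let k divide v, 2 ≤ k ≤ v. The block set of any cyclic resolvable (v,k)-configuration is the set of all v translates of a single block X that is a (v,k)-resolvable modular Golomb ruler; in particular, the elements of X are pairwise distinct modulo k. -/

import Mathlib

/-- A symmetric (v,k)-configuration on the point set `ZMod v`: `v` blocks of size `k`,
no pair of distinct points in more than one block, every point in exactly `k` blocks. -/
def IsConfig (v k : ℕ) (B : Finset (Finset (ZMod v))) : Prop :=
  B.card = v ∧
  (∀ b ∈ B, b.card = k) ∧
  (∀ b₁ ∈ B, ∀ b₂ ∈ B, ∀ x y : ZMod v,
    x ≠ y → x ∈ b₁ → y ∈ b₁ → x ∈ b₂ → y ∈ b₂ → b₁ = b₂) ∧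
  (∀ x : ZMod v, (B.filter (fun b => x ∈ b)).card = k)

/-- A parallel class: a set of pairwise disjoint blocks whose union is the point set. -/
def IsParallelClass (v : ℕ) (P : Finset (Finset (ZMod v))) : Prop :=
  (∀ x : ZMod v, ∃ b ∈ P, x ∈ b) ∧
  (∀ b₁ ∈ P, ∀ b₂ ∈ P, b₁ ≠ b₂ → Disjoint b₁ b₂)

/-- A resolution of the block set `B` into `r` parallel classes. -/
def IsResolution (v r : ℕ) (B : Finset (Finset (ZMod v)))
    (R : Finset (Finset (Finset (ZMod v)))) : Prop :=
  R.card = r ∧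
  (∀ P ∈ R, P ⊆ B ∧ IsParallelClass v P) ∧
  (∀ b ∈ B, ∃! P, P ∈ R ∧ b ∈ P)

/-- The block set is invariant under the translation x ↦ x + 1 (mod v). -/
def CyclicBlocks (v : ℕ) (B : Finset (Finset (ZMod v))) : Prop :=
  ∀ b ∈ B, b.image (· + 1) ∈ B

/-- The resolution is invariant under the translation x ↦ x + 1 (mod v). -/
def CyclicResolution (v : ℕ) (R : Finset (Finset (Finset (ZMod v)))) : Prop :=
  ∀ P ∈ R, P.image (fun b => b.image (· + 1)) ∈ R

/-- A (v,k)-modular Golomb ruler: a k-subset of `ZMod v` whose differences of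
ordered pairs of distinct elements are pairwise distinct in `ZMod v`. -/
def IsMGR (v k : ℕ) (X : Finset (ZMod v)) : Prop :=
  X.card = k ∧
  ∀ a ∈ X, ∀ b ∈ X, ∀ c ∈ X, ∀ d ∈ X,
    a - b = c - d → (a = b ∧ c = d) ∨ (a = c ∧ b = d)

/-- A (v,k)-resolvable modular Golomb ruler: a (v,k)-MGR whose elements
(taken as their canonical representatives in {0,…,v−1}) cover all k residue
classes modulo k. -/
def IsRMGR (v k : ℕ) (X : Finset (ZMod v)) : Prop :=
  IsMGR v k X ∧ ∀ r : ZMod k, ∃ x ∈ X, ((x.val : ZMod k) = r)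

/-- The set of all v translates of X in `ZMod v`. -/
def AllTranslates (v : ℕ) (X : Finset (ZMod v)) : Finset (Finset (ZMod v)) :=
  (Finset.range v).image (fun t : ℕ => X.image (· + (t : ZMod v)))


/-!
The resolution is translation invariant, hence so is the block set. If `t ≠ 0` fixes a block
`X`, then two blocks fixed by `t` that share a point `x` also share `x + t`, so they coincide;
this makes `X` a coset of its stabilizer, a subgroup of order `k`. A cyclic group has only one
subgroup of order `k`, so all blocks with nontrivial stabilizer lie in one orbit of `v / k`
blocks, and some block `X` has trivial stabilizer. Its orbit has `v` blocks and is therefore all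
of `B`, and the pair condition on `X` and its translates is exactly the Golomb ruler property.
Finally, the translates of `X` by the stabilizer `H` of its parallel class are pairwise disjoint
and, since `H` has index at most `k`, they tile `ZMod v`; then `|H| = v / k`, so every element of
`H` is a multiple of `k` and `X` meets every residue class modulo `k`.
-/

open Finset Pointwise AddAction

theorem IsAddCyclic.addSubgroup_eq_of_card_eq {G : Type*} [AddCommGroup G] [IsAddCyclic G]
    [Finite G] {H K : AddSubgroup G} (h : Nat.card H = Nat.card K) : H = K := by
  suffices ∀ L : AddSubgroup G, L = (nsmulAddMonoidHom (Nat.card L) : G →+ G).ker by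
    rw [this H, this K, h]
  intro L
  refine AddSubgroup.eq_of_le_of_card_ge (fun w hw => ?_) ?_
  · exact addOrderOf_dvd_iff_nsmul_eq_zero.1 (L.addOrderOf_dvd_natCard hw)
  · rw [IsAddCyclic.card_nsmulAddMonoidHom_ker, Nat.gcd_eq_right L.card_addSubgroup_dvd_card]

def IsPartialLinearSpace {α : Type*} (B : Finset (Finset α)) : Prop :=
  ∀ b₁ ∈ B, ∀ b₂ ∈ B, ∀ x y : α, x ≠ y → x ∈ b₁ → y ∈ b₁ → x ∈ b₂ → y ∈ b₂ → b₁ = b₂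

section Translates

variable {G : Type*} [AddCommGroup G] [DecidableEq G] {B : Finset (Finset G)}
  {X Y : Finset G}

theorem image_add_right_eq_vadd (t : G) (b : Finset G) : b.image (· + t) = t +ᵥ b := by
  simp only [vadd_finset_def, vadd_eq_add, add_comm]

theorem mem_sub_vadd_finset {x₀ : G} (hx₀ : x₀ ∈ X) (x : G) : x ∈ (x - x₀) +ᵥ X := by
  simpa using vadd_mem_vadd_finset (a := x - x₀) hx₀

theorem IsPartialLinearSpace.eq_of_vadd_eq_self (hB : IsPartialLinearSpace B) (hX : X ∈ B)
    (hY : Y ∈ B) {t : G} (ht : t ≠ 0) (htX : t +ᵥ X = X) (htY : t +ᵥ Y = Y) {x : G}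
    (hxX : x ∈ X) (hxY : x ∈ Y) : X = Y := by
  have hx : t + x ∈ X ∩ Y := by
    rw [← htX, ← htY, mem_inter]
    exact ⟨vadd_mem_vadd_finset hxX, vadd_mem_vadd_finset hxY⟩
  exact hB X hX Y hY x (t + x) (by simpa using ht) hxX (mem_inter.1 hx).1 hxY
    (mem_inter.1 hx).2

theorem IsPartialLinearSpace.sub_mem_stabilizer (hB : IsPartialLinearSpace B)
    (hcl : ∀ u : G, ∀ b ∈ B, u +ᵥ b ∈ B) (hX : X ∈ B) {t : G} (ht : t ≠ 0)
    (htX : t +ᵥ X = X) {x₀ x : G} (hx₀ : x₀ ∈ X) (hx : x ∈ X) :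
    x - x₀ ∈ stabilizer G X := by
  have hfix : t +ᵥ (x - x₀) +ᵥ X = (x - x₀) +ᵥ X := by rw [vadd_comm, htX]
  exact hB.eq_of_vadd_eq_self (hcl _ X hX) hX ht hfix htX (mem_sub_vadd_finset hx₀ x) hx

theorem IsPartialLinearSpace.card_stabilizer_eq_card (hB : IsPartialLinearSpace B)
    (hcl : ∀ u : G, ∀ b ∈ B, u +ᵥ b ∈ B) (hX : X ∈ B) (hS : stabilizer G X ≠ ⊥)
    {x₀ : G} (hx₀ : x₀ ∈ X) : Nat.card (stabilizer G X) = X.card := by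
  obtain ⟨⟨t, htX⟩, ht⟩ := (AddSubgroup.ne_bot_iff_exists_ne_zero).1 hS
  have hmem {w : G} (hw : w ∈ stabilizer G X) : w + x₀ ∈ X := by
    rw [← mem_stabilizer_iff.1 hw]
    exact vadd_mem_vadd_finset hx₀
  rw [← Nat.card_eq_finsetCard]
  refine Nat.card_congr
    { toFun := fun w => ⟨w + x₀, hmem w.2⟩
      invFun := fun x => ⟨x - x₀, hB.sub_mem_stabilizer hcl hX ?_ htX hx₀ x.2⟩
      left_inv := fun w => by simp
      right_inv := fun x => by simp }
  simpa using ht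

theorem IsPartialLinearSpace.mem_orbit_of_stabilizer_ne_bot [IsAddCyclic G] [Finite G]
    (hB : IsPartialLinearSpace B) (hcl : ∀ u : G, ∀ b ∈ B, u +ᵥ b ∈ B) (hX : X ∈ B)
    (hY : Y ∈ B) (hXY : X.card = Y.card) (hX₀ : X.Nonempty) (hSX : stabilizer G X ≠ ⊥)
    (hSY : stabilizer G Y ≠ ⊥) : Y ∈ orbit G X := by
  obtain ⟨x₀, hx₀⟩ := hX₀
  obtain ⟨y, hy⟩ : Y.Nonempty := card_pos.1 (hXY ▸ card_pos.2 ⟨x₀, hx₀⟩)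
  have hS : stabilizer G X = stabilizer G Y := IsAddCyclic.addSubgroup_eq_of_card_eq <| by
    rw [hB.card_stabilizer_eq_card hcl hX hSX hx₀, hB.card_stabilizer_eq_card hcl hY hSY hy, hXY]
  obtain ⟨⟨t, htX⟩, ht⟩ := (AddSubgroup.ne_bot_iff_exists_ne_zero).1 hSX
  have hfix : t +ᵥ (y - x₀) +ᵥ X = (y - x₀) +ᵥ X := by rw [vadd_comm, mem_stabilizer_iff.1 htX]
  exact ⟨y - x₀, hB.eq_of_vadd_eq_self (hcl _ X hX) hY (by simpa using ht) hfix
    (mem_stabilizer_iff.1 (hS ▸ htX)) (mem_sub_vadd_finset hx₀ y) hy⟩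

theorem IsPartialLinearSpace.exists_stabilizer_eq_bot [IsAddCyclic G] [Finite G] {k : ℕ}
    (hB : IsPartialLinearSpace B) (hcl : ∀ u : G, ∀ b ∈ B, u +ᵥ b ∈ B)
    (hBcard : B.card = Nat.card G) (hsize : ∀ b ∈ B, b.card = k) (hk : 2 ≤ k) :
    ∃ X ∈ B, stabilizer G X = ⊥ := by
  by_contra! h
  have hG := Nat.card_pos (α := G)
  obtain ⟨X, hX⟩ : B.Nonempty := card_pos.1 (hBcard ▸ hG)
  have hX₀ : X.Nonempty := card_pos.1 (by rw [hsize X hX]; omega)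
  have hsub : (B : Set (Finset G)) ⊆ orbit G X := fun Y hY =>
    hB.mem_orbit_of_stabilizer_ne_bot hcl hX hY (by rw [hsize X hX, hsize Y hY]) hX₀ (h X hX)
      (h Y hY)
  have hle : B.card ≤ (stabilizer G X).index := by
    rw [index_stabilizer, ← Set.ncard_coe_finset]
    exact Set.ncard_le_ncard hsub (Set.toFinite _)
  have hmul := (stabilizer G X).card_mul_index
  rw [hB.card_stabilizer_eq_card hcl hX (h X hX) hX₀.choose_spec, hsize X hX] at hmul
  nlinarith

theorem coe_eq_orbit_of_stabilizer_eq_bot [Finite G] (hcl : ∀ u : G, ∀ b ∈ B, u +ᵥ b ∈ B)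
    (hBcard : B.card = Nat.card G) (hX : X ∈ B) (hS : stabilizer G X = ⊥) :
    (B : Set (Finset G)) = orbit G X := by
  refine (Set.eq_of_subset_of_ncard_le ?_ ?_ B.finite_toSet).symm
  · rintro _ ⟨u, rfl⟩
    exact hcl u X hX
  · rw [Set.ncard_coe_finset, ← index_stabilizer, hS, AddSubgroup.index_bot, hBcard]

theorem bijective_add_of_index_stabilizer_le [Finite G] {P : Finset (Finset G)}
    (hdisj : ∀ b₁ ∈ P, ∀ b₂ ∈ P, b₁ ≠ b₂ → Disjoint b₁ b₂) (hXP : X ∈ P)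
    (hS : stabilizer G X = ⊥) (hindex : (stabilizer G P).index ≤ X.card) :
    Function.Bijective (fun p : stabilizer G P × X => (p.1 : G) + p.2) := by
  have hmem {w : G} (hw : w ∈ stabilizer G P) : w +ᵥ X ∈ P := by
    rw [← mem_stabilizer_iff.1 hw]
    exact vadd_mem_vadd_finset hXP
  have hinj : Function.Injective (fun p : stabilizer G P × X => (p.1 : G) + p.2) := by
    rintro ⟨⟨w, hw⟩, ⟨x, hx⟩⟩ ⟨⟨w', hw'⟩, ⟨x', hx'⟩⟩ (h : w + x = w' + x')
    have hblocks : w +ᵥ X = w' +ᵥ X := by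
      by_contra hne
      refine disjoint_left.1 (hdisj _ (hmem hw) _ (hmem hw') hne) (vadd_mem_vadd_finset hx) ?_
      rw [vadd_eq_add, h]
      exact vadd_mem_vadd_finset hx'
    have hww' : -w' + w ∈ stabilizer G X := by
      rw [mem_stabilizer_iff, add_vadd, hblocks, neg_vadd_vadd]
    rw [hS, AddSubgroup.mem_bot, neg_add_eq_zero] at hww'
    subst hww'
    simpa using h
  refine hinj.bijective_of_nat_card_le ?_
  rw [Nat.card_prod, Nat.card_eq_finsetCard, ← (stabilizer G P).card_mul_index]
  exact Nat.mul_le_mul_left _ hindex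

end Translates

section ZMod

variable {v k : ℕ}

theorem ZMod.vadd_mem_of_forall_one_vadd_mem [NeZero v] {α : Type*} [AddAction (ZMod v) α]
    {s : Set α} (h : ∀ x ∈ s, (1 : ZMod v) +ᵥ x ∈ s) (t : ZMod v) {x : α} (hx : x ∈ s) :
    t +ᵥ x ∈ s := by
  rw [← ZMod.natCast_zmod_val t]
  induction t.val with
  | zero => simpa using hx
  | succ n ih => rw [Nat.cast_succ, add_comm, add_vadd]; exact h _ ih

theorem ZMod.dvd_val_of_nsmul_eq_zero [NeZero v] {m : ℕ} (hmk : m * k = v) {w : ZMod v}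
    (hw : m • w = 0) : k ∣ w.val := by
  rw [← ZMod.natCast_zmod_val w, nsmul_eq_mul, ← Nat.cast_mul, ZMod.natCast_eq_zero_iff] at hw
  have hm : m ≠ 0 := by rintro rfl; exact NeZero.ne v (by rw [← hmk, zero_mul])
  exact Nat.dvd_of_mul_dvd_mul_left (Nat.pos_of_ne_zero hm) (by rwa [hmk])

theorem coe_allTranslates [NeZero v] (X : Finset (ZMod v)) :
    (AllTranslates v X : Set (Finset (ZMod v))) = orbit (ZMod v) X := by
  ext b
  simp only [AllTranslates, coe_image, coe_range, Set.mem_image, Set.mem_Iio, mem_orbit_iff,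
    image_add_right_eq_vadd]
  constructor
  · rintro ⟨n, -, rfl⟩
    exact ⟨n, rfl⟩
  · rintro ⟨u, rfl⟩
    exact ⟨u.val, ZMod.val_lt u, by rw [ZMod.natCast_zmod_val]⟩

theorem CyclicResolution.vadd_mem [NeZero v] {R : Finset (Finset (Finset (ZMod v)))}
    (hcyc : CyclicResolution v R) (t : ZMod v) {P : Finset (Finset (ZMod v))} (hP : P ∈ R) :
    t +ᵥ P ∈ R := by
  refine mem_coe.1 (ZMod.vadd_mem_of_forall_one_vadd_mem (fun P hP => ?_) t (mem_coe.2 hP))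
  simpa only [image_add_right_eq_vadd, vadd_finset_def, mem_coe] using hcyc P hP

theorem IsResolution.vadd_mem [NeZero v] {r : ℕ} {B : Finset (Finset (ZMod v))}
    {R : Finset (Finset (Finset (ZMod v)))} (hR : IsResolution v r B R)
    (hcyc : CyclicResolution v R) (t : ZMod v) {b : Finset (ZMod v)} (hb : b ∈ B) :
    t +ᵥ b ∈ B := by
  obtain ⟨P, ⟨hPR, hbP⟩, -⟩ := hR.2.2 b hb
  exact (hR.2.1 _ (hcyc.vadd_mem t hPR)).1 (vadd_mem_vadd_finset hbP)

theorem IsPartialLinearSpace.isMGR {B : Finset (Finset (ZMod v))} (hB : IsPartialLinearSpace B)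
    (hcl : ∀ u : ZMod v, ∀ b ∈ B, u +ᵥ b ∈ B) {X : Finset (ZMod v)} (hX : X ∈ B)
    (hS : stabilizer (ZMod v) X = ⊥) (hXk : X.card = k) : IsMGR v k X := by
  refine ⟨hXk, fun a ha b hb c hc d hd habcd => ?_⟩
  by_cases hab : a = b
  · rw [hab, sub_self, eq_comm, sub_eq_zero] at habcd
    exact Or.inl ⟨hab, habcd⟩
  have hac : a - c ∈ stabilizer (ZMod v) X := by
    refine hB _ (hcl (a - c) X hX) X hX a b hab ?_ ?_ ha hb
    · simpa using vadd_mem_vadd_finset (a := a - c) hc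
    · simpa [show a - c + d = b by linear_combination habcd]
        using vadd_mem_vadd_finset (a := a - c) hd
  rw [hS, AddSubgroup.mem_bot, sub_eq_zero] at hac
  subst hac
  exact Or.inr ⟨rfl, sub_right_injective habcd⟩

theorem IsResolution.exists_val_cast_eq [NeZero v] {B : Finset (Finset (ZMod v))}
    {R : Finset (Finset (Finset (ZMod v)))} (hR : IsResolution v k B R)
    (hcyc : CyclicResolution v R) (hdvd : k ∣ v) {X : Finset (ZMod v)} (hXB : X ∈ B)
    (hS : stabilizer (ZMod v) X = ⊥) (hXk : X.card = k) (r : ZMod k) :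
    ∃ x ∈ X, (x.val : ZMod k) = r := by
  have : NeZero k := ⟨by rintro rfl; exact NeZero.ne v (zero_dvd_iff.1 hdvd)⟩
  obtain ⟨hRcard, hRP, hRuniq⟩ := hR
  obtain ⟨P, ⟨hPR, hXP⟩, -⟩ := hRuniq X hXB
  set H := stabilizer (ZMod v) P
  have hindex : H.index ≤ X.card := by
    rw [index_stabilizer, hXk, ← hRcard, ← Set.ncard_coe_finset]
    exact Set.ncard_le_ncard (by rintro _ ⟨u, rfl⟩; exact hcyc.vadd_mem u hPR) R.finite_toSet
  have hbij := bijective_add_of_index_stabilizer_le (hRP P hPR).2.2 hXP hS hindex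
  have hcard : Nat.card H * k = v := by
    rw [← hXk, ← Nat.card_eq_finsetCard, ← Nat.card_prod,
      Nat.card_congr (Equiv.ofBijective _ hbij), Nat.card_zmod]
  obtain ⟨⟨⟨w, hw⟩, ⟨x, hx⟩⟩, hwx⟩ := hbij.2 (r.val : ZMod v)
  have hkw : k ∣ w.val := ZMod.dvd_val_of_nsmul_eq_zero hcard
    (addOrderOf_dvd_iff_nsmul_eq_zero.1 (H.addOrderOf_dvd_natCard hw))
  refine ⟨x, hx, ?_⟩
  have := congrArg (ZMod.castHom hdvd (ZMod k)) hwx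
  rwa [map_add, map_natCast, ZMod.natCast_zmod_val, ZMod.castHom_apply, ZMod.castHom_apply,
    ZMod.cast_eq_val, ZMod.cast_eq_val, (ZMod.natCast_eq_zero_iff _ _).2 hkw, zero_add] at this

theorem IsRMGR.injOn_val_cast [NeZero k] {X : Finset (ZMod v)} (h : IsRMGR v k X) :
    Set.InjOn (fun x : ZMod v => (x.val : ZMod k)) X :=
  injOn_of_surjOn_of_card_le (t := univ) _ (fun _ _ => mem_coe.2 (mem_univ _))
    (fun r _ => h.2 r) (by rw [h.1.1, card_univ, ZMod.card])

end ZMod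

/-- The block set of any cyclic resolvable (v,k)-configuration (k ∣ v, 2 ≤ k ≤ v) is
the set of all v translates of a single block X that is a (v,k)-resolvable modular
Golomb ruler; in particular, the elements of X are pairwise distinct modulo k. -/
theorem cyclic_resolvable_config_gives_RMGR (v k : ℕ) (hk : 2 ≤ k) (hkv : k ≤ v)
    (hdvd : k ∣ v) (B : Finset (Finset (ZMod v)))
    (R : Finset (Finset (Finset (ZMod v))))
    (hB : IsConfig v k B) (hR : IsResolution v k B R)
    (hcyc : CyclicResolution v R) :
    ∃ X ∈ B, IsRMGR v k X ∧ B = AllTranslates v X ∧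
      (∀ x ∈ X, ∀ y ∈ X, x ≠ y → ((x.val : ZMod k) ≠ (y.val : ZMod k))) := by
  have : NeZero v := ⟨by omega⟩
  have : NeZero k := ⟨by omega⟩
  obtain ⟨hBcard, hsize, hlin : IsPartialLinearSpace B, -⟩ := hB
  have hBcard' : B.card = Nat.card (ZMod v) := by rw [hBcard, Nat.card_zmod]
  have hcl : ∀ u : ZMod v, ∀ b ∈ B, u +ᵥ b ∈ B := fun u _ hb => hR.vadd_mem hcyc u hb
  obtain ⟨X, hXB, hS⟩ := hlin.exists_stabilizer_eq_bot hcl hBcard' hsize hk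
  have hRMGR : IsRMGR v k X :=
    ⟨hlin.isMGR hcl hXB hS (hsize X hXB), hR.exists_val_cast_eq hcyc hdvd hXB hS (hsize X hXB)⟩
  refine ⟨X, hXB, hRMGR, ?_, fun x hx y hy hxy => hxy ∘ hRMGR.injOn_val_cast hx hy⟩
  rw [← coe_inj, coe_allTranslates, coe_eq_orbit_of_stabilizer_eq_bot hcl hBcard' hXB hS]
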